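/- Let f : K → ℝ be centered, ⟨f⟩^s = 0. Then the function V(x) = −∑_z ρ^s(z) f(z) τ(x,z) + C, for any constant C, solves the Poisson equation LV(x) + f(x) = 0 for all x ∈ K; the constant C can be chosen so that ⟨V⟩^s = 0. -/

import Mathlib

/-!
Write `τ_z = τ(·, z)`. By definition `L τ_z = -1` off `z`, and stationarity gives
`∑ₓ ρ(x) (L τ_z)(x) = 0`, which pins down the remaining value: `ρ(z) (L τ_z)(x) = δ_{xz} - ρ(z)`.
Hence `L (∑_z ρ(z) f(z) τ_z) = f - ⟨f⟩ˢ = f`, so `V = -∑_z ρ(z) f(z) τ_z + C` solves `LV + f = 0`;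
constants lie in the kernel of `L`, and `C = ⟨∑_z ρ(z) f(z) τ_z⟩ˢ` centers `V`.
-/

open scoped Classical

/-- The backward generator `L` of the Markov jump process with rates `k`:
`L x y = k x y` for `x ≠ y` and `L x x = -∑_{z ≠ x} k x z`. -/
noncomputable def gen {K : Type*} [Fintype K] [DecidableEq K] (k : K → K → ℝ) :
    Matrix K K ℝ :=
  Matrix.of fun x y => if x = y then -∑ z ∈ Finset.univ.erase x, k x z else k x y

/-- Strong connectivity (irreducibility) of the digraph with an arc `(x,y)` whenever
`k x y > 0`. -/
def StronglyConnected {K : Type*} (k : K → K → ℝ) : Prop :=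
  ∀ x y : K, Relation.ReflTransGen (fun a b => 0 < k a b) x y

open Finset Matrix

namespace MarkovGenerator

variable {K : Type*} [Fintype K] [DecidableEq K]

theorem gen_mulVec_apply (k : K → K → ℝ) (h : K → ℝ) (x : K) :
    (gen k *ᵥ h) x = ∑ y, k x y * (h y - h x) := by
  have hoff : ∀ y ∈ univ.erase x, gen k x y * h y = k x y * h y := fun y hy => by
    rw [gen, of_apply, if_neg (ne_of_mem_erase hy).symm]
  rw [mulVec, dotProduct, ← add_sum_erase _ _ (mem_univ x), sum_congr rfl hoff,
    ← add_sum_erase _ _ (mem_univ x)]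
  simp only [gen, of_apply, if_true, sub_self, mul_zero, zero_add, mul_sub, sum_sub_distrib,
    ← sum_mul]
  ring

theorem dotProduct_gen_mulVec_of_vecMul_eq_zero {k : K → K → ℝ} {ρ : K → ℝ}
    (hρ : ρ ᵥ* gen k = 0) (h : K → ℝ) : ρ ⬝ᵥ (gen k *ᵥ h) = 0 := by
  rw [dotProduct_mulVec, hρ, zero_dotProduct]

theorem mul_gen_mulVec_of_eq_neg_one_of_ne {k : K → K → ℝ} {ρ : K → ℝ}
    (hρsum : ∑ x, ρ x = 1) (hρ : ρ ᵥ* gen k = 0) {h : K → ℝ} {z : K}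
    (hh : ∀ x, x ≠ z → (gen k *ᵥ h) x = -1) (x : K) :
    ρ z * (gen k *ᵥ h) x = (if x = z then 1 else 0) - ρ z := by
  have hmass : ∑ y ∈ univ.erase z, ρ y * (gen k *ᵥ h) y = -(1 - ρ z) := by
    rw [sum_congr rfl fun y hy => by rw [hh y (ne_of_mem_erase hy), mul_neg_one],
      sum_neg_distrib, sum_erase_eq_sub (mem_univ z), hρsum]
  have hbalance := dotProduct_gen_mulVec_of_vecMul_eq_zero hρ h
  rw [dotProduct, ← add_sum_erase _ _ (mem_univ z), hmass] at hbalance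
  split_ifs with hx
  · subst hx; linarith
  · rw [hh x hx]; ring

theorem gen_mulVec_weighted_sum_mfpt {k : K → K → ℝ} {ρ : K → ℝ}
    (hρsum : ∑ x, ρ x = 1) (hρ : ρ ᵥ* gen k = 0) {τ : K → K → ℝ}
    (hτ : ∀ z x, x ≠ z → (gen k *ᵥ fun y => τ y z) x = -1)
    {f : K → ℝ} (hf : ∑ x, f x * ρ x = 0) (x : K) :
    (gen k *ᵥ fun w => ∑ z, ρ z * f z * τ w z) x = f x := by
  have hlin : (fun w => ∑ z, ρ z * f z * τ w z) = ∑ z, (ρ z * f z) • fun w => τ w z := by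
    ext w; simp [Finset.sum_apply]
  calc (gen k *ᵥ fun w => ∑ z, ρ z * f z * τ w z) x
      = ∑ z, f z * (ρ z * (gen k *ᵥ fun w => τ w z) x) := by
        rw [hlin, mulVec_sum, Finset.sum_apply]
        simp only [mulVec_smul, Pi.smul_apply, smul_eq_mul]
        exact sum_congr rfl fun z _ => by ring
    _ = ∑ z, f z * ((if x = z then 1 else 0) - ρ z) := by
        simp only [mul_gen_mulVec_of_eq_neg_one_of_ne hρsum hρ (hτ _)]
    _ = f x := by simp [mul_sub, sum_sub_distrib, hf]

end MarkovGenerator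

open MarkovGenerator

theorem quasipotential_from_mfpt_general
    {K : Type*} [Fintype K] [DecidableEq K]
    (k : K → K → ℝ)
    (ρ : K → ℝ) (hρsum : ∑ x, ρ x = 1)
    (hρstat : Matrix.vecMul ρ (gen k) = 0)
    (τ : K → K → ℝ)
    (hτ : ∀ z x, x ≠ z → (∑ y, k x y * (τ y z - τ x z)) + 1 = 0)
    (f : K → ℝ) (hf : ∑ x, f x * ρ x = 0) :
    (∀ C : ℝ, ∀ x,
      (∑ y, k x y * ((-∑ z, ρ z * f z * τ y z + C) - (-∑ z, ρ z * f z * τ x z + C)))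
        + f x = 0) ∧
    (∃ C : ℝ, ∑ x, (-∑ z, ρ z * f z * τ x z + C) * ρ x = 0) := by
  set S : K → ℝ := fun w => ∑ z, ρ z * f z * τ w z
  have hLτ : ∀ z x, x ≠ z → (gen k *ᵥ fun y => τ y z) x = -1 := fun z x hx => by
    rw [gen_mulVec_apply]; linarith [hτ z x hx]
  have hLS : ∀ x, ∑ y, k x y * (S y - S x) = f x := fun x => by
    rw [← gen_mulVec_apply]; exact gen_mulVec_weighted_sum_mfpt hρsum hρstat hLτ hf x
  refine ⟨fun C x => ?_, ⟨∑ x, S x * ρ x, ?_⟩⟩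
  · rw [← hLS x, ← sum_add_distrib]
    exact sum_eq_zero fun y _ => by ring
  · simp only [add_mul, sum_add_distrib, ← mul_sum, hρsum, neg_mul, sum_neg_distrib]
    ring

/-- For centered `f`, the function `V(x) = -∑_z ρˢ(z) f(z) τ(x,z) + C` solves the Poisson
equation `LV + f = 0` for every constant `C`, and `C` can be chosen so that `⟨V⟩ˢ = 0`. -/
theorem quasipotential_from_mfpt
    {K : Type*} [Fintype K] [DecidableEq K]
    (k : K → K → ℝ) (hk : ∀ x y : K, x ≠ y → 0 ≤ k x y)
    (hirr : StronglyConnected k)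
    (ρ : K → ℝ) (hρpos : ∀ x, 0 < ρ x) (hρsum : ∑ x, ρ x = 1)
    (hρstat : Matrix.vecMul ρ (gen k) = 0)
    (τ : K → K → ℝ) (hτ0 : ∀ z, τ z z = 0)
    (hτ : ∀ z x, x ≠ z → (∑ y, k x y * (τ y z - τ x z)) + 1 = 0)
    (f : K → ℝ) (hf : ∑ x, f x * ρ x = 0) :
    (∀ C : ℝ, ∀ x,
      (∑ y, k x y * ((-∑ z, ρ z * f z * τ y z + C) - (-∑ z, ρ z * f z * τ x z + C)))
        + f x = 0) ∧
    (∃ C : ℝ, ∑ x, (-∑ z, ρ z * f z * τ x z + C) * ρ x = 0) :=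
  quasipotential_from_mfpt_general k ρ hρsum hρstat τ hτ f hf
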